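/- arXiv:2412.11633 — 2 statements merged into one kernel-verified Lean document; each statement's English description precedes it below -/
import Mathlib

section
/- Let Φ be the non-selective measurement channel associated with a complete family of pairwise orthogonal projections {P_a} on ℂ^n. For every Hermitian n×n matrix σ, every complex n×n matrix ρ, and every function f : ℝ → ℝ applied to the Hermitian matrix Φ(σ) via the functional calculus, one has Tr(ρ · f(Φ(σ))) = Tr(Φ(ρ) · f(Φ(σ))). -/
/-!
`Φ(σ)` commutes with every `P a`, because orthogonality kills the cross terms of `P a * Φ(σ)`
and `Φ(σ) * P a`. Hence `B = f(Φ(σ))` commutes with every `P a` too, so `Φ(B) = B`; and `Φ` is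
self-adjoint for the trace pairing, giving `Tr(ρ B) = Tr(ρ Φ(B)) = Tr(Φ(ρ) B)`.
-/

open Matrix Kronecker
open scoped ComplexOrder

noncomputable section

variable {n : Type*} [Fintype n] [DecidableEq n]

/-- `|X| = (X† X)^{1/2}`, the positive semidefinite absolute value of a matrix. -/
def matAbs (X : Matrix n n ℂ) : Matrix n n ℂ :=
  ((Matrix.posSemidef_conjTranspose_mul_self X).1.eigenvectorUnitary : Matrix n n ℂ) *
    diagonal (((↑) : ℝ → ℂ) ∘ (√·) ∘ (Matrix.posSemidef_conjTranspose_mul_self X).1.eigenvalues) *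
    (star (Matrix.posSemidef_conjTranspose_mul_self X).1.eigenvectorUnitary : Matrix n n ℂ)

/-- `Tr |X|^p`, with the `p`-th power taken through the functional calculus. -/
def traceAbsPow (p : ℝ) (X : Matrix n n ℂ) : ℝ :=
  (Matrix.trace (cfc (fun x : ℝ => x ^ p) (matAbs X))).re

/-- The Schatten `p`-norm `‖X‖_p = (Tr |X|^p)^(1/p)`. -/
def schatten (p : ℝ) (X : Matrix n n ℂ) : ℝ :=
  (traceAbsPow p X) ^ (1 / p)

/-- Matrix square root via the functional calculus (agrees with the positive semidefinite
square root on positive semidefinite matrices). -/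
def msqrt (X : Matrix n n ℂ) : Matrix n n ℂ := cfc Real.sqrt X

/-- Matrix natural logarithm via the functional calculus. -/
def mlog (X : Matrix n n ℂ) : Matrix n n ℂ := cfc Real.log X

/-- Von Neumann entropy `S(ρ) = -Tr(ρ log ρ)`. -/
def vnEntropy (ρ : Matrix n n ℂ) : ℝ := -(Matrix.trace (ρ * mlog ρ)).re

/-- Relative entropy `S(ρ‖σ) = Tr(ρ log ρ) - Tr(ρ log σ)`. -/
def relEnt (ρ σ : Matrix n n ℂ) : ℝ :=
  (Matrix.trace (ρ * mlog ρ)).re - (Matrix.trace (ρ * mlog σ)).re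

/-- Uhlmann fidelity `F(ρ,σ) = (Tr|√σ √ρ|)²`. -/
def fidelity (ρ σ : Matrix n n ℂ) : ℝ :=
  ((Matrix.trace (matAbs (msqrt σ * msqrt ρ))).re) ^ 2

/-- Partial trace over the second factor. -/
def ptraceE {S E : Type*} [Fintype E] (Ω : Matrix (S × E) (S × E) ℂ) : Matrix S S ℂ :=
  Matrix.of fun s s' => ∑ e, Ω (s, e) (s', e)

/-- Partial trace over the first factor. -/
def ptraceS {S E : Type*} [Fintype S] (Ω : Matrix (S × E) (S × E) ℂ) : Matrix E E ℂ :=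
  Matrix.of fun e e' => ∑ s, Ω (s, e) (s, e')

def measurementChannel {R ι : Type*} [NonUnitalNonAssocSemiring R] [Fintype ι] (e : ι → R)
    (x : R) : R :=
  ∑ i, e i * x * e i

section Semiring

variable {R ι : Type*} [Semiring R] [Fintype ι] {e : ι → R}

theorem OrthogonalIdempotents.mul_measurementChannel (he : OrthogonalIdempotents e)
    (i : ι) (x : R) : e i * measurementChannel e x = e i * x * e i := by
  rw [measurementChannel, Finset.mul_sum, Finset.sum_eq_single i]
  · rw [← mul_assoc, ← mul_assoc, (he.idem i).eq]
  · intro j _ hji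
    rw [← mul_assoc, ← mul_assoc, he.ortho hji.symm, zero_mul, zero_mul]
  · simp

theorem OrthogonalIdempotents.measurementChannel_mul (he : OrthogonalIdempotents e)
    (i : ι) (x : R) : measurementChannel e x * e i = e i * x * e i := by
  rw [measurementChannel, Finset.sum_mul, Finset.sum_eq_single i]
  · rw [mul_assoc, (he.idem i).eq]
  · intro j _ hji
    rw [mul_assoc, mul_assoc, he.ortho hji, mul_zero, mul_zero]
  · simp

theorem OrthogonalIdempotents.commute_measurementChannel (he : OrthogonalIdempotents e)
    (i : ι) (x : R) : Commute (e i) (measurementChannel e x) :=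
  (he.mul_measurementChannel i x).trans (he.measurementChannel_mul i x).symm

theorem CompleteOrthogonalIdempotents.measurementChannel_eq_self_of_commute
    (he : CompleteOrthogonalIdempotents e) {y : R} (hy : ∀ i, Commute (e i) y) :
    measurementChannel e y = y := by
  calc measurementChannel e y = ∑ i, y * e i := by
        refine Finset.sum_congr rfl fun i _ => ?_
        rw [(hy i).eq, mul_assoc, (he.idem i).eq]
    _ = y := by rw [← Finset.mul_sum, he.complete, mul_one]

end Semiring

theorem Matrix.trace_measurementChannel_mul {m R ι : Type*} [Fintype m] [CommSemiring R]
    [Fintype ι] (e : ι → Matrix m m R) (x y : Matrix m m R) :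
    trace (measurementChannel e x * y) = trace (x * measurementChannel e y) := by
  simp only [measurementChannel, Finset.sum_mul, Finset.mul_sum, trace_sum]
  refine Finset.sum_congr rfl fun i _ => ?_
  rw [mul_assoc, mul_assoc, trace_mul_comm]
  simp only [mul_assoc]

theorem trace_mul_cfc_measurement_general
    {n ι : Type*} [Fintype n] [DecidableEq n] [Fintype ι]
    (P : ι → Matrix n n ℂ)
    (horth : ∀ a b, a ≠ b → P a * P b = 0)
    (hsum : ∑ a, P a = 1)
    (σ : Matrix n n ℂ)
    (ρ : Matrix n n ℂ) (f : ℝ → ℝ)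
    (hΦσ : (∑ a, P a * σ * P a).IsHermitian) :
    Matrix.trace (ρ * hΦσ.cfc f)
      = Matrix.trace ((∑ a, P a * ρ * P a) * hΦσ.cfc f) := by
  have hP : CompleteOrthogonalIdempotents P :=
    CompleteOrthogonalIdempotents.iff_ortho_complete.mpr ⟨fun a b => horth a b, hsum⟩
  have hcomm : ∀ a, Commute (P a) (hΦσ.cfc f) := fun a => by
    rw [← hΦσ.cfc_eq]
    exact ((hP.commute_measurementChannel a σ).symm.cfc_real f).symm
  calc Matrix.trace (ρ * hΦσ.cfc f)
      = Matrix.trace (ρ * measurementChannel P (hΦσ.cfc f)) := by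
        rw [hP.measurementChannel_eq_self_of_commute hcomm]
    _ = Matrix.trace ((∑ a, P a * ρ * P a) * hΦσ.cfc f) :=
        (trace_measurementChannel_mul P ρ _).symm

/-- Lemma 1 of the paper: `Tr(ρ f(Φ(σ))) = Tr(Φ(ρ) f(Φ(σ)))`, where `f` is applied to the
Hermitian matrix `Φ(σ)` through the spectral functional calculus. -/
theorem trace_mul_cfc_measurement
    {n ι : Type*} [Fintype n] [DecidableEq n] [Fintype ι]
    (P : ι → Matrix n n ℂ)
    (hproj : ∀ a, P a * P a = P a)
    (hherm : ∀ a, (P a)ᴴ = P a)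
    (horth : ∀ a b, a ≠ b → P a * P b = 0)
    (hsum : ∑ a, P a = 1)
    (σ : Matrix n n ℂ) (hσ : σ.IsHermitian)
    (ρ : Matrix n n ℂ) (f : ℝ → ℝ)
    (hΦσ : (∑ a, P a * σ * P a).IsHermitian) :
    Matrix.trace (ρ * hΦσ.cfc f)
      = Matrix.trace ((∑ a, P a * ρ * P a) * hΦσ.cfc f) :=
  trace_mul_cfc_measurement_general P horth hsum σ ρ f hΦσ
end
end

section
/- Let d ≥ 1, let |φ⟩ := (1/√d)·Σ_{a=0}^{d−1} |a⟩⊗|a⟩ ∈ ℂ^d⊗ℂ^d be the maximally entangled state, ρ := |φ⟩⟨φ|, and let Φ be the local measurement in the standard basis of the first factor, Φ(X) := Σ_a (E_aa ⊗ 1_d) X (E_aa ⊗ 1_d). Then Φ(ρ) = (1/d)·Σ_a E_aa ⊗ E_aa, and the three geometric quantities attaining the maximal violation of quantum realism evaluate to: ‖ρ − Φ(ρ)‖₂² = 1 − 1/d, F(ρ, Φ(ρ)) = 1/d, and Tr(√ρ · √Φ(ρ)) = 1/√d. -/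
open Matrix Kronecker
open scoped ComplexOrder

noncomputable section

variable {n : Type*} [Fintype n] [DecidableEq n]

/-- The maximally entangled vector `|φ⟩ = (1/√d) Σ_a |a⟩ ⊗ |a⟩` of two qudits. -/
def maxEntVec (d : ℕ) : Fin d × Fin d → ℂ :=
  fun x => if x.1 = x.2 then ((Real.sqrt d : ℝ) : ℂ)⁻¹ else 0

/-- The maximally entangled state `ρ = |φ⟩⟨φ|`. -/
def maxEntState (d : ℕ) : Matrix (Fin d × Fin d) (Fin d × Fin d) ℂ :=
  Matrix.vecMulVec (maxEntVec d) (star (maxEntVec d))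

/-- The local measurement in the standard basis of the first factor. -/
def measStd (d : ℕ) (X : Matrix (Fin d × Fin d) (Fin d × Fin d) ℂ) :
    Matrix (Fin d × Fin d) (Fin d × Fin d) ℂ :=
  ∑ a : Fin d,
    (Matrix.single a a (1 : ℂ) ⊗ₖ (1 : Matrix (Fin d) (Fin d) ℂ)) * X *
      (Matrix.single a a (1 : ℂ) ⊗ₖ (1 : Matrix (Fin d) (Fin d) ℂ))

/-! The state `ρ` is a rank-one projection, and `Φ(ρ) = P / d` for the projection `P` onto the span
of the vectors `|a⟩ ⊗ |a⟩`, which contains the range of `ρ`, so `P ρ = ρ P = ρ`. Hence `√ρ = ρ`,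
`√Φ(ρ) = P / √d` and `√Φ(ρ) √ρ = ρ / √d`, which is positive semidefinite and so is its own absolute
value; and `‖ρ - P / d‖₂² = Tr ρ - (2 / d) Tr ρ + Tr P / d² = 1 - 1 / d`. -/

open scoped MatrixOrder

lemma msqrt_eq_of_mul_self {A B : Matrix n n ℂ} (hB : B.PosSemidef) (h : B * B = A) :
    msqrt A = B := by
  have hB' : IsSelfAdjoint B := hB.1
  rw [← h, msqrt, ← pow_two, ← cfc_comp_pow Real.sqrt 2 B]
  conv_rhs => rw [← cfc_id ℝ B]
  refine cfc_congr fun x hx => ?_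
  simp [Real.sqrt_sq (spectrum_nonneg_of_nonneg hB.nonneg hx)]

lemma msqrt_mul_self {A : Matrix n n ℂ} (hA : A.PosSemidef) : msqrt A * msqrt A = A := by
  have hA' : IsSelfAdjoint A := hA.1
  rw [msqrt, ← cfc_mul Real.sqrt Real.sqrt A]
  conv_rhs => rw [← cfc_id ℝ A]
  refine cfc_congr fun x hx => ?_
  simp [Real.mul_self_sqrt (spectrum_nonneg_of_nonneg hA.nonneg hx)]

lemma matAbs_eq_msqrt (X : Matrix n n ℂ) : matAbs X = msqrt (Xᴴ * X) := by
  rw [msqrt, (posSemidef_conjTranspose_mul_self X).1.cfc_eq]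
  rfl

lemma matAbs_of_posSemidef {A : Matrix n n ℂ} (hA : A.PosSemidef) : matAbs A = A := by
  rw [matAbs_eq_msqrt, hA.1.eq]
  exact msqrt_eq_of_mul_self hA rfl

lemma traceAbsPow_two (X : Matrix n n ℂ) : traceAbsPow 2 X = (trace (Xᴴ * X)).re := by
  have hX : IsSelfAdjoint (matAbs X) := by
    rw [matAbs_eq_msqrt, msqrt]
    exact cfc_predicate _ _
  have hpow : (fun x : ℝ => x ^ (2 : ℝ)) = fun x => x ^ 2 := by
    funext x
    exact_mod_cast Real.rpow_natCast x 2
  rw [traceAbsPow, hpow, cfc_pow_id _ 2 hX, pow_two, matAbs_eq_msqrt,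
    msqrt_mul_self (posSemidef_conjTranspose_mul_self X)]

lemma schatten_two_sq (X : Matrix n n ℂ) : schatten 2 X ^ 2 = (trace (Xᴴ * X)).re := by
  have h := Complex.nonneg_iff.mp (posSemidef_conjTranspose_mul_self X).trace_nonneg
  rw [schatten, traceAbsPow_two, ← Real.sqrt_eq_rpow, Real.sq_sqrt h.1]

section Projection

variable {ρ P : Matrix n n ℂ}

lemma msqrt_smul_of_idempotent (hP : P.PosSemidef) (hPP : P * P = P) {c : ℝ} (hc : 0 ≤ c) :
    msqrt ((c : ℂ) • P) = (√c : ℂ) • P := by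
  refine msqrt_eq_of_mul_self (hP.smul (by exact_mod_cast Real.sqrt_nonneg c)) ?_
  rw [smul_mul_smul_comm, hPP, ← Complex.ofReal_mul, Real.mul_self_sqrt hc]

lemma mul_eq_self_of_mul_eq_self {m : Type*} [Fintype m] {A B : Matrix m m ℂ}
    (hA : A.IsHermitian) (hB : B.IsHermitian) (hBA : B * A = A) : A * B = A := by
  simpa [hA.eq, hB.eq] using congrArg conjTranspose hBA

lemma msqrt_mul_msqrt_smul (hρ : ρ.PosSemidef) (hρρ : ρ * ρ = ρ) (hP : P.PosSemidef)
    (hPP : P * P = P) (hPρ : P * ρ = ρ) {c : ℝ} (hc : 0 ≤ c) :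
    msqrt ρ * msqrt ((c : ℂ) • P) = (√c : ℂ) • ρ := by
  rw [msqrt_eq_of_mul_self hρ hρρ, msqrt_smul_of_idempotent hP hPP hc, mul_smul_comm,
    mul_eq_self_of_mul_eq_self hρ.1 hP.1 hPρ]

lemma fidelity_smul_of_idempotent (hρ : ρ.PosSemidef) (hρρ : ρ * ρ = ρ) (hP : P.PosSemidef)
    (hPP : P * P = P) (hPρ : P * ρ = ρ) {c : ℝ} (hc : 0 ≤ c) :
    fidelity ρ ((c : ℂ) • P) = c * (trace ρ).re ^ 2 := by
  have hsqrt : msqrt ((c : ℂ) • P) * msqrt ρ = (√c : ℂ) • ρ := by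
    rw [msqrt_eq_of_mul_self hρ hρρ, msqrt_smul_of_idempotent hP hPP hc, smul_mul_assoc, hPρ]
  rw [fidelity, hsqrt, matAbs_of_posSemidef (hρ.smul (by exact_mod_cast Real.sqrt_nonneg c)),
    trace_smul, smul_eq_mul, Complex.re_ofReal_mul, mul_pow, Real.sq_sqrt hc]

lemma schatten_two_sub_smul_sq (hρ : ρ.IsHermitian) (hρρ : ρ * ρ = ρ) (hP : P.IsHermitian)
    (hPP : P * P = P) (hPρ : P * ρ = ρ) (c : ℝ) :
    schatten 2 (ρ - (c : ℂ) • P) ^ 2 = (1 - 2 * c) * (trace ρ).re + c ^ 2 * (trace P).re := by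
  have hherm : (ρ - (c : ℂ) • P)ᴴ = ρ - (c : ℂ) • P := by
    simp [conjTranspose_sub, conjTranspose_smul, hρ.eq, hP.eq]
  rw [schatten_two_sq, hherm, sub_mul, mul_sub, mul_sub, smul_mul_assoc, mul_smul_comm,
    mul_smul_comm, smul_mul_assoc, hρρ, hPρ, mul_eq_self_of_mul_eq_self hρ hP hPρ, smul_smul,
    hPP]
  simp only [trace_sub, trace_smul, smul_eq_mul, ← Complex.ofReal_mul, Complex.sub_re,
    Complex.re_ofReal_mul]
  ring

end Projection

section DiagPairProj

def diagPairProj (m : Type*) [DecidableEq m] : Matrix (m × m) (m × m) ℂ :=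
  diagonal fun x => if x.1 = x.2 then 1 else 0

variable {m : Type*} [DecidableEq m]

lemma diagPairProj_posSemidef : (diagPairProj m).PosSemidef :=
  PosSemidef.diagonal fun x => by dsimp only; split_ifs <;> simp

variable [Fintype m]

lemma sum_single_kronecker_single :
    ∑ a : m, single a a (1 : ℂ) ⊗ₖ single a a (1 : ℂ) = diagPairProj m := by
  rw [diagPairProj, ← sum_single_eq_diagonal, Fintype.sum_prod_type]
  simp [single_kronecker_single, apply_ite (single _ _)]

lemma diagPairProj_mul_self : diagPairProj m * diagPairProj m = diagPairProj m := by
  simp [diagPairProj, diagonal_mul_diagonal]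

lemma trace_diagPairProj : trace (diagPairProj m) = Fintype.card m := by
  rw [diagPairProj, trace_diagonal, Fintype.sum_prod_type]
  simp

end DiagPairProj

lemma measStd_apply (d : ℕ) (X : Matrix (Fin d × Fin d) (Fin d × Fin d) ℂ) (x y : Fin d × Fin d) :
    measStd d X x y = if x.1 = y.1 then X x y else 0 := by
  have hblock (a : Fin d) : single a a (1 : ℂ) ⊗ₖ (1 : Matrix (Fin d) (Fin d) ℂ) =
      diagonal fun x => if x.1 = a then 1 else 0 := by
    rw [← diagonal_single, ← diagonal_one, diagonal_kronecker_diagonal]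
    simp [Pi.single_apply]
  simp [measStd, Matrix.sum_apply, hblock, diagonal_mul, mul_diagonal]

section MaxEntState

variable (d : ℕ)

lemma maxEntState_apply (x y : Fin d × Fin d) :
    maxEntState d x y = if x.1 = x.2 ∧ y.1 = y.2 then (d : ℂ)⁻¹ else 0 := by
  have hsq : ((√d : ℝ) : ℂ)⁻¹ * ((√d : ℝ) : ℂ)⁻¹ = (d : ℂ)⁻¹ := by
    rw [← mul_inv, ← Complex.ofReal_mul, Real.mul_self_sqrt d.cast_nonneg, Complex.ofReal_natCast]
  by_cases hx : x.1 = x.2 <;> by_cases hy : y.1 = y.2 <;>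
    simp [maxEntState, vecMulVec_apply, maxEntVec, hx, hy, hsq]

lemma maxEntState_posSemidef : (maxEntState d).PosSemidef := by
  rw [maxEntState, vecMulVec_eq Unit, ← conjTranspose_replicateCol]
  exact posSemidef_self_mul_conjTranspose _

lemma diagPairProj_mul_maxEntState : diagPairProj (Fin d) * maxEntState d = maxEntState d := by
  ext x y
  rw [diagPairProj, diagonal_mul, maxEntState_apply]
  split_ifs <;> simp_all

lemma measStd_maxEntState : measStd d (maxEntState d) = (d : ℂ)⁻¹ • diagPairProj (Fin d) := by
  ext ⟨a, b⟩ ⟨c, e⟩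
  rw [measStd_apply, maxEntState_apply, Matrix.smul_apply, diagPairProj, diagonal_apply]
  simp only [Prod.mk.injEq, smul_eq_mul]
  split_ifs <;> grind

variable {d}

lemma maxEntState_mul_self (hd : d ≠ 0) : maxEntState d * maxEntState d = maxEntState d := by
  ext x y
  simp only [mul_apply, maxEntState_apply, Fintype.sum_prod_type]
  by_cases hx : x.1 = x.2 <;> by_cases hy : y.1 = y.2 <;> simp [hx, hy, hd]

lemma trace_maxEntState (hd : d ≠ 0) : trace (maxEntState d) = 1 := by
  simp [trace, maxEntState_apply, Fintype.sum_prod_type, hd]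

end MaxEntState

/-- For the maximally entangled state `ρ`, `Φ(ρ) = (1/d) Σ_a E_aa ⊗ E_aa`, and the
geometric quantities attaining maximal violation of quantum realism evaluate to
`‖ρ - Φ(ρ)‖₂² = 1 - 1/d`, `F(ρ, Φ(ρ)) = 1/d`, and `Tr(√ρ √Φ(ρ)) = 1/√d`. -/
theorem maxEnt_geometric_quantities (d : ℕ) (hd : 1 ≤ d) :
    measStd d (maxEntState d)
      = (d : ℂ)⁻¹ • ∑ a : Fin d,
          Matrix.single a a (1 : ℂ) ⊗ₖ Matrix.single a a (1 : ℂ) ∧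
    schatten 2 (maxEntState d - measStd d (maxEntState d)) ^ 2 = 1 - 1 / (d : ℝ) ∧
    fidelity (maxEntState d) (measStd d (maxEntState d)) = 1 / (d : ℝ) ∧
    (Matrix.trace (msqrt (maxEntState d) * msqrt (measStd d (maxEntState d)))).re
      = 1 / Real.sqrt d := by
  have hd0 : d ≠ 0 := by omega
  have hρ := maxEntState_posSemidef d
  have hρρ := maxEntState_mul_self hd0
  have hP := diagPairProj_posSemidef (m := Fin d)
  have hPP := diagPairProj_mul_self (m := Fin d)
  have hPρ := diagPairProj_mul_maxEntState d
  have hc : (0 : ℝ) ≤ (d : ℝ)⁻¹ := by positivity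
  have hσ : measStd d (maxEntState d) = (((d : ℝ)⁻¹ : ℝ) : ℂ) • diagPairProj (Fin d) := by
    rw [measStd_maxEntState, Complex.ofReal_inv, Complex.ofReal_natCast]
  refine ⟨by rw [measStd_maxEntState, sum_single_kronecker_single], ?_, ?_, ?_⟩
  · rw [hσ, schatten_two_sub_smul_sq hρ.1 hρρ hP.1 hPP hPρ, trace_maxEntState hd0,
      trace_diagPairProj]
    simp only [Complex.one_re, Fintype.card_fin, Complex.natCast_re]
    field_simp
    ring
  · rw [hσ, fidelity_smul_of_idempotent hρ hρρ hP hPP hPρ hc, trace_maxEntState hd0]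
    simp
  · rw [hσ, msqrt_mul_msqrt_smul hρ hρρ hP hPP hPρ hc, trace_smul, trace_maxEntState hd0,
      smul_eq_mul, Complex.re_ofReal_mul, Complex.one_re, mul_one, Real.sqrt_inv, one_div]
end
end
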